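/- If S is a Σ_uc-admissible supervisor with S||G cc-simulated by R via Φ, then S||G is simulated by 𝒜(E(Φ))||G, where E(Φ) = { θ_y : y ∈ Y } and θ_y = { (x,z) : ((y,x),z) ∈ Φ, (y,x) reachable in S||G }. Hence any solution to the similarity control problem with required events is dominated (w.r.t. simulation) by a supervisor of the form 𝒜(E). -/

import Mathlib

/-- An automaton with state type `S` and event alphabet `E`:
a transition relation and a set of initial states. -/
structure Automaton (S : Type) (E : Type) where
  trans : S → E → S → Prop
  init : Set S

/-- Extension of the transition relation to finite event sequences. -/
def TransSeq {S E : Type} (G : Automaton S E) : S → List E → S → Prop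
  | x, [], x' => x = x'
  | x, σ :: s, x'' => ∃ x', G.trans x σ x' ∧ TransSeq G x' s x''

/-- `x` is `s`-reachable in `G`. -/
def ReachSeq {S E : Type} (G : Automaton S E) (s : List E) (x : S) : Prop :=
  ∃ x₀ ∈ G.init, TransSeq G x₀ s x

/-- `x` is reachable in `G`. -/
def Reachable {S E : Type} (G : Automaton S E) (x : S) : Prop :=
  ∃ s : List E, ReachSeq G s x

/-- The language of an automaton: all event sequences executable from some initial state. -/
def Lang {S E : Type} (G : Automaton S E) : Set (List E) :=
  {s | ∃ x, ReachSeq G s x}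

/-- `Φ` is a simulation from `G` to `R`. -/
def IsSimulation {X Z E : Type} (G : Automaton X E) (R : Automaton Z E)
    (Φ : Set (X × Z)) : Prop :=
  (∀ x₀ ∈ G.init, ∃ z₀ ∈ R.init, (x₀, z₀) ∈ Φ) ∧
  (∀ p ∈ Φ, ∀ (σ : E), ∀ x', G.trans p.1 σ x' →
    ∃ z', R.trans p.2 σ z' ∧ (x', z') ∈ Φ)

/-- `G` is simulated by `R` (`G ⊑ R`). -/
def Simulated {X Z E : Type} (G : Automaton X E) (R : Automaton Z E) : Prop :=
  ∃ Φ, IsSimulation G R Φ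

/-- `Φ` is a covariant-contravariant simulation from `G` to `R`, with required events `Sr`. -/
def IsCCSimulation {X Z E : Type} (Sr : Set E) (G : Automaton X E) (R : Automaton Z E)
    (Φ : Set (X × Z)) : Prop :=
  IsSimulation G R Φ ∧
  (∀ p ∈ Φ, ∀ σ ∈ Sr, ∀ z', R.trans p.2 σ z' →
    ∃ x', G.trans p.1 σ x' ∧ (x', z') ∈ Φ)

/-- `G` is cc-simulated by `R` (`G ⊑_cc R`). -/
def CCSimulated {X Z E : Type} (Sr : Set E) (G : Automaton X E) (R : Automaton Z E) : Prop :=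
  ∃ Φ, IsCCSimulation Sr G R Φ

/-- `Φ` is a bisimulation from `G` to `R`: both `Φ` and its inverse are simulations. -/
def IsBisimulation {X Z E : Type} (G : Automaton X E) (R : Automaton Z E)
    (Φ : Set (X × Z)) : Prop :=
  IsSimulation G R Φ ∧ IsSimulation R G {p | (p.2, p.1) ∈ Φ}

/-- `G` is bisimilar to `R` (`G ≃ R`). -/
def Bisimilar {X Z E : Type} (G : Automaton X E) (R : Automaton Z E) : Prop :=
  ∃ Φ, IsBisimulation G R Φ

/-- `Φ` is a `Σ_uc`-simulation from `G` to `R`. -/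
def IsUcSimulation {X Z E : Type} (Suc : Set E) (G : Automaton X E) (R : Automaton Z E)
    (Φ : Set (X × Z)) : Prop :=
  (∀ x₀ ∈ G.init, ∃ z₀ ∈ R.init, (x₀, z₀) ∈ Φ) ∧
  (∀ p ∈ Φ, ∀ σ ∈ Suc, ∀ x', G.trans p.1 σ x' →
    ∃ z', R.trans p.2 σ z' ∧ (x', z') ∈ Φ)

/-- `Φ` is a `Σ_ucr`-simulation from `G` to `R`:
(initial state), (Σ_uc-forward) and (Σ_r-backward). -/
def IsUcrSimulation {X Z E : Type} (Suc Sr : Set E) (G : Automaton X E) (R : Automaton Z E)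
    (Φ : Set (X × Z)) : Prop :=
  IsUcSimulation Suc G R Φ ∧
  (∀ p ∈ Φ, ∀ σ ∈ Sr, ∀ z', R.trans p.2 σ z' →
    ∃ x', G.trans p.1 σ x' ∧ (x', z') ∈ Φ)

/-- Synchronous composition `S || G`. -/
def Sync {Y X E : Type} (S : Automaton Y E) (G : Automaton X E) : Automaton (Y × X) E where
  trans p σ q := S.trans p.1 σ q.1 ∧ G.trans p.2 σ q.2
  init := S.init ×ˢ G.init

/-- `S` is `Σ_uc`-admissible with respect to `G`. -/
def Admissible {Y X E : Type} (Suc : Set E) (S : Automaton Y E) (G : Automaton X E) : Prop :=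
  ∀ p : Y × X, Reachable (Sync S G) p → ∀ σ ∈ Suc,
    (∃ x', G.trans p.2 σ x') → ∃ q, (Sync S G).trans p σ q

/-- `match_{G,R}(W, σ, W')`. -/
def MatchW {X Z E : Type} (G : Automaton X E) (R : Automaton Z E)
    (W : Set (X × Z)) (σ : E) (W' : Set (X × Z)) : Prop :=
  ∀ p ∈ W, ∀ x', G.trans p.1 σ x' →
    ∃ z', R.trans p.2 σ z' ∧ (x', z') ∈ W'

/-- `Ecs` is a `Σ_ucr`-controllability set from `G` to `R`. -/
def ControlSet {X Z E : Type} (Suc Sr : Set E) (G : Automaton X E) (R : Automaton Z E)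
    (Ecs : Set (Set (X × Z))) : Prop :=
  (∃ W₀ ∈ Ecs, ∀ x₀ ∈ G.init, ∃ z₀ ∈ R.init, (x₀, z₀) ∈ W₀) ∧
  (∀ W ∈ Ecs, ∀ σ ∈ Suc, ∃ W' ∈ Ecs, MatchW G R W σ W') ∧
  (∀ W ∈ Ecs, ∀ p ∈ W, ∀ σ ∈ Sr, ∀ z', R.trans p.2 σ z' →
    ∃ x', ∃ W' ∈ Ecs, G.trans p.1 σ x' ∧ (x', z') ∈ W' ∧ MatchW G R W σ W')

/-- The downward closure `P(E) = ⋃_{W ∈ E} 𝒫(W)`. -/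
def PE {X Z : Type} (Ecs : Set (Set (X × Z))) : Set (Set (X × Z)) :=
  {W | ∃ W' ∈ Ecs, W ⊆ W'}

/-- `⋃_{(x,z) ∈ W} {x' : x →σ x'} × {z' : z →σ z'}`. -/
def SuccSet {X Z E : Type} (G : Automaton X E) (R : Automaton Z E)
    (W : Set (X × Z)) (σ : E) : Set (X × Z) :=
  {q | ∃ p ∈ W, G.trans p.1 σ q.1 ∧ R.trans p.2 σ q.2}

/-- The automaton `𝒜(E)` induced by a `Σ_ucr`-controllability set `Ecs`.
Its states are the members of `P(Ecs)` (enforced in the transition relation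
and initial-state set). -/
def AutA {X Z E : Type} (G : Automaton X E) (R : Automaton Z E)
    (Ecs : Set (Set (X × Z))) : Automaton (Set (X × Z)) E where
  trans W σ W' :=
    W ∈ PE Ecs ∧ W' ∈ PE Ecs ∧
    (∃ p ∈ W, ∃ q ∈ W', G.trans p.1 σ q.1 ∧ R.trans p.2 σ q.2) ∧
    MatchW G R W σ W' ∧ W' ⊆ SuccSet G R W σ
  init := {W₀ | W₀ ∈ PE Ecs ∧ W₀ ⊆ G.init ×ˢ R.init ∧
    ∀ x₀ ∈ G.init, ∃ z₀ ∈ R.init, (x₀, z₀) ∈ W₀}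

/-- A deterministic automaton: a single initial state, and at most one
`σ`-successor of each state. -/
def Deterministic {S E : Type} (G : Automaton S E) : Prop :=
  (∃ x₀, G.init = {x₀}) ∧
  ∀ x (σ : E) x₁ x₂, G.trans x σ x₁ → G.trans x σ x₂ → x₁ = x₂

/-- `Φ` is uniform with respect to `Sr`. -/
def UniformRel {X Z E : Type} (Sr : Set E) (G : Automaton X E) (R : Automaton Z E)
    (Φ : Set (X × Z)) : Prop :=
  ∀ (s : List E), ∀ p₁ ∈ Φ, ∀ p₂ ∈ Φ,
    ReachSeq G s p₁.1 → ReachSeq G s p₂.1 → ReachSeq R s p₁.2 → ReachSeq R s p₂.2 →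
    ∀ σ ∈ Sr, (∃ z', R.trans p₁.2 σ z') → ∀ x₂', G.trans p₂.1 σ x₂' →
      ∃ z₂', R.trans p₂.2 σ z₂' ∧ (x₂', z₂') ∈ Φ

/-- The fixpoint operator `F_{(G,R)}`. -/
def Fop {X Z E : Type} (Suc Sr : Set E) (G : Automaton X E) (R : Automaton Z E)
    (Ecs : Set (Set (X × Z))) : Set (Set (X × Z)) :=
  {W | W ∈ Ecs ∧
    (∀ σ ∈ Suc, ∃ W' ∈ Ecs, MatchW G R W σ W') ∧
    (∀ p ∈ W, ∀ σ ∈ Sr, ∀ z', R.trans p.2 σ z' →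
      ∃ x', ∃ W' ∈ Ecs, G.trans p.1 σ x' ∧ (x', z') ∈ W' ∧ MatchW G R W σ W')}

/-- The greatest fixpoint `E↑` of `F_{(G,R)}`: the union of all post-fixpoints. -/
def Egfp {X Z E : Type} (Suc Sr : Set E) (G : Automaton X E) (R : Automaton Z E) :
    Set (Set (X × Z)) :=
  ⋃₀ {Ecs | Ecs ⊆ Fop Suc Sr G R Ecs}

/-!
While `S || G` moves along `(y, x) →σ (y', x')`, the supervisor `𝒜(E(Φ))` follows it with a
state `W ⊆ θ_y` containing some pair `(x, z)`, and moves to the part of the σ-successors of `W`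
that lies in `θ_{y'}`. The forward clause of `Φ` makes this a matching, nonempty step, so
`((y, x), (W, x))` is a simulation relation.
-/

/-- The state set `θ_y` of `E(Φ)`. -/
def reachableSection {Y X Z E : Type} (S : Automaton Y E) (G : Automaton X E)
    (Φ : Set ((Y × X) × Z)) (y : Y) : Set (X × Z) :=
  {p | ((y, p.1), p.2) ∈ Φ ∧ Reachable (Sync S G) (y, p.1)}

theorem TransSeq.snoc {S E : Type} {G : Automaton S E} {σ : E} :
    ∀ {s : List E} {a b c : S}, TransSeq G a s b → G.trans b σ c →
      TransSeq G a (s ++ [σ]) c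
  | [], _, _, c, rfl, hbc => ⟨c, hbc, rfl⟩
  | _ :: _, _, _, _, ⟨a', haa', hs⟩, hbc => ⟨a', haa', snoc hs hbc⟩

theorem Reachable.of_trans {S E : Type} {G : Automaton S E} {a b : S} {σ : E}
    (ha : Reachable G a) (hab : G.trans a σ b) : Reachable G b := by
  obtain ⟨s, x₀, hx₀, hs⟩ := ha
  exact ⟨s ++ [σ], x₀, hx₀, hs.snoc hab⟩

theorem reachable_init {S E : Type} {G : Automaton S E} {x : S} (hx : x ∈ G.init) :
    Reachable G x :=
  ⟨[], x, hx, rfl⟩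

section

variable {Y X Z E : Type} {S : Automaton Y E} {G : Automaton X E} {R : Automaton Z E}
  {Φ : Set ((Y × X) × Z)}

theorem matchW_succSet_inter_reachableSection (hΦ : IsSimulation (Sync S G) R Φ)
    {W : Set (X × Z)} {y y' : Y} {σ : E} (hW : W ⊆ reachableSection S G Φ y)
    (hy : S.trans y σ y') :
    MatchW G R W σ (SuccSet G R W σ ∩ reachableSection S G Φ y') := by
  rintro ⟨x, z⟩ hxz x' hx
  obtain ⟨hΦxz, hreach⟩ := hW hxz
  obtain ⟨z', hz, hΦ'⟩ := hΦ.2 ((y, x), z) hΦxz σ (y', x') ⟨hy, hx⟩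
  exact ⟨z', hz, ⟨(x, z), hxz, hx, hz⟩, hΦ', hreach.of_trans ⟨hy, hx⟩⟩

theorem reachableSection_inter_init_mem_autA_init (hΦ : IsSimulation (Sync S G) R Φ)
    {y₀ : Y} (hy₀ : y₀ ∈ S.init) :
    reachableSection S G Φ y₀ ∩ G.init ×ˢ R.init ∈
      (AutA G R (Set.range (reachableSection S G Φ))).init := by
  refine ⟨⟨_, ⟨y₀, rfl⟩, Set.inter_subset_left⟩, Set.inter_subset_right, fun x₀ hx₀ => ?_⟩
  obtain ⟨z₀, hz₀, hΦ₀⟩ := hΦ.1 (y₀, x₀) ⟨hy₀, hx₀⟩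
  exact ⟨z₀, hz₀, ⟨hΦ₀, reachable_init ⟨hy₀, hx₀⟩⟩, hx₀, hz₀⟩

theorem autA_trans_succSet_inter_reachableSection (hΦ : IsSimulation (Sync S G) R Φ)
    {W : Set (X × Z)} {y y' : Y} {x x' : X} {z : Z} {σ : E}
    (hW : W ⊆ reachableSection S G Φ y) (hxz : (x, z) ∈ W) (hy : S.trans y σ y')
    (hx : G.trans x σ x') :
    (AutA G R (Set.range (reachableSection S G Φ))).trans W σ
        (SuccSet G R W σ ∩ reachableSection S G Φ y') ∧
      ∃ z', (x', z') ∈ SuccSet G R W σ ∩ reachableSection S G Φ y' := by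
  have hmatch := matchW_succSet_inter_reachableSection hΦ hW hy
  obtain ⟨z', hz, hxz'⟩ := hmatch (x, z) hxz x' hx
  exact ⟨⟨⟨_, ⟨y, rfl⟩, hW⟩, ⟨_, ⟨y', rfl⟩, Set.inter_subset_right⟩,
    ⟨(x, z), hxz, (x', z'), hxz', hx, hz⟩, hmatch, Set.inter_subset_left⟩, z', hxz'⟩

theorem simulated_sync_autA (hΦ : IsSimulation (Sync S G) R Φ) :
    Simulated (Sync S G) (Sync (AutA G R (Set.range (reachableSection S G Φ))) G) := by
  let θ := reachableSection S G Φ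
  refine ⟨{q | q.2.2 = q.1.2 ∧ q.2.1 ⊆ θ q.1.1 ∧ ∃ z, (q.1.2, z) ∈ q.2.1}, ?_, ?_⟩
  · rintro ⟨y₀, x₀⟩ ⟨hy₀, hx₀⟩
    obtain ⟨z₀, hz₀, hΦ₀⟩ := hΦ.1 (y₀, x₀) ⟨hy₀, hx₀⟩
    exact ⟨(θ y₀ ∩ G.init ×ˢ R.init, x₀),
      ⟨reachableSection_inter_init_mem_autA_init hΦ hy₀, hx₀⟩, rfl, Set.inter_subset_left,
      z₀, ⟨hΦ₀, reachable_init ⟨hy₀, hx₀⟩⟩, hx₀, hz₀⟩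
  · rintro ⟨⟨y, x⟩, W, x₂⟩ ⟨hx₂, hWθ, z, hxz⟩ σ ⟨y', x'⟩ ⟨hy, hx⟩
    obtain rfl : x = x₂ := hx₂.symm
    obtain ⟨htrans, hx'⟩ := autA_trans_succSet_inter_reachableSection hΦ hWθ hxz hy hx
    exact ⟨(SuccSet G R W σ ∩ θ y', x'), ⟨htrans, hx⟩, rfl, Set.inter_subset_right, hx'⟩

end

theorem solution_dominated_by_autA_general {E X Z Y : Type} (Sr : Set E)
    (G : Automaton X E) (R : Automaton Z E) (S : Automaton Y E)
    (Φ : Set ((Y × X) × Z))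
    (hΦ : IsCCSimulation Sr (Sync S G) R Φ) :
    Simulated (Sync S G)
      (Sync (AutA G R
        {W | ∃ y : Y, W = {p : X × Z |
          ((y, p.1), p.2) ∈ Φ ∧ Reachable (Sync S G) (y, p.1)}}) G) := by
  have hEcs : {W | ∃ y : Y, W = {p : X × Z |
      ((y, p.1), p.2) ∈ Φ ∧ Reachable (Sync S G) (y, p.1)}} =
      Set.range (reachableSection S G Φ) := by
    ext W
    exact exists_congr fun _ => eq_comm
  rw [hEcs]
  exact simulated_sync_autA hΦ.1

/-- every solution `S` is dominated (w.r.t. simulation) by the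
supervisor `𝒜(E(Φ))`. -/
theorem solution_dominated_by_autA {E X Z Y : Type} (Suc Sr : Set E)
    (G : Automaton X E) (R : Automaton Z E) (S : Automaton Y E)
    (hY : S.init.Nonempty)
    (Φ : Set ((Y × X) × Z))
    (hS : Admissible Suc S G)
    (hΦ : IsCCSimulation Sr (Sync S G) R Φ) :
    Simulated (Sync S G)
      (Sync (AutA G R
        {W | ∃ y : Y, W = {p : X × Z |
          ((y, p.1), p.2) ∈ Φ ∧ Reachable (Sync S G) (y, p.1)}}) G) :=
  solution_dominated_by_autA_general Sr G R S Φ hΦ
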